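/- arXiv:1606.06536 — 5 statements merged into one kernel-verified Lean document; each statement's English description precedes it below -/
import Mathlib

section
/- Let α ≥ 0 and let (a_n) be a sequence of positive reals, with A_n = a_1 + ⋯ + a_n, such that a_i/A_i ~ (α+1)/i as i → ∞. If ∑_{i=1}^n i^{-1} a_i → ∞, then ∑_{i=1}^n A_i^{-1} a_i^2 is asymptotically equivalent to (α+1)·∑_{i=1}^n i^{-1} a_i, i.e. (∑_{i=1}^n A_i^{-1} a_i^2) / (∑_{i=1}^n i^{-1} a_i) → α+1 as n → ∞. -/
open Filter

/-- If `i·a_i/A_i → α+1`, then `∑_{i≤n} A_i⁻¹ a_i²` is asymptotically equivalent to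
`(α+1)·∑_{i≤n} i⁻¹ a_i`, provided the latter tends to infinity. -/
theorem stmt_4 (α : ℝ) (hα : 0 ≤ α) (a : ℕ → ℝ) (ha : ∀ i, 1 ≤ i → 0 < a i)
    (A : ℕ → ℝ) (hA : ∀ n, A n = ∑ i ∈ Finset.Icc 1 n, a i)
    (hratio : Tendsto (fun i : ℕ => (i : ℝ) * a i / A i) atTop (nhds (α + 1)))
    (hdiv : Tendsto (fun n : ℕ => ∑ i ∈ Finset.Icc 1 n, a i / i) atTop atTop) :
    Tendsto (fun n : ℕ =>
        (∑ i ∈ Finset.Icc 1 n, (a i) ^ 2 / A i) /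
          ((α + 1) * ∑ i ∈ Finset.Icc 1 n, a i / i)) atTop (nhds 1) := by
  set w : ℕ → ℝ := fun i => a i / i with hwdef
  set f : ℕ → ℝ := fun i => a i ^ 2 / A i with hfdef
  set G : ℕ → ℝ := fun n => ∑ i ∈ Finset.Icc 1 n, w i with hGdef
  set F : ℕ → ℝ := fun n => ∑ i ∈ Finset.Icc 1 n, f i with hFdef
  have hApos : ∀ i, 1 ≤ i → 0 < A i := by
    intro i hi
    rw [hA]
    apply Finset.sum_pos
    · intro j hj
      exact ha j (Finset.mem_Icc.mp hj).1
    · exact ⟨1, Finset.mem_Icc.mpr ⟨le_refl 1, hi⟩⟩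
  have hw : ∀ i, 0 ≤ w i := by
    intro i
    rcases Nat.eq_zero_or_pos i with h | h
    · simp [hwdef, h]
    · exact le_of_lt (div_pos (ha i h) (by exact_mod_cast h))
  have hwpos : ∀ i, 1 ≤ i → 0 < w i := fun i h =>
    div_pos (ha i h) (by exact_mod_cast h)
  have hfw : ∀ i, 1 ≤ i → f i = ((i : ℝ) * a i / A i) * w i := by
    intro i hi
    have hi0 : (i : ℝ) ≠ 0 := by exact_mod_cast (Nat.pos_of_ne_zero (by omega)).ne'
    have hA0 : A i ≠ 0 := (hApos i hi).ne'
    simp only [hfdef, hwdef]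
    field_simp
  -- converting Icc sums to range sums
  have key : ∀ (u : ℕ → ℝ), u 0 = 0 → ∀ n,
      ∑ i ∈ Finset.Icc 1 n, u i = ∑ i ∈ Finset.range (n + 1), u i := by
    intro u hu n
    rw [Finset.sum_range_succ', hu, add_zero, ← Finset.Ico_add_one_right_eq_Icc,
      Finset.sum_Ico_eq_sum_range]
    simp [add_comm]
  have hw0 : w 0 = 0 := by simp [hwdef]
  have hf0 : f 0 = 0 := by simp [hfdef, hA]
  -- divergence of range sums of w
  have hGdiv : Tendsto (fun n => ∑ i ∈ Finset.range n, w i) atTop atTop := by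
    rw [show (fun n => ∑ i ∈ Finset.range n, w i)
        = (fun n => ∑ i ∈ Finset.range n, w i) from rfl]
    have h1 : Tendsto (fun n => ∑ i ∈ Finset.range (n + 1), w i) atTop atTop := by
      apply hdiv.congr
      intro n
      exact key w hw0 n
    exact (tendsto_add_atTop_iff_nat 1).mp h1
  have hε : Tendsto (fun i : ℕ => (i : ℝ) * a i / A i - (α + 1)) atTop (nhds 0) :=
    tendsto_sub_nhds_zero_iff.mpr hratio
  have ho : (fun i => f i - (α + 1) * w i) =o[atTop] w := by
    have h1 : (fun i : ℕ => ((i : ℝ) * a i / A i - (α + 1)) * w i) =o[atTop] w := by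
      have := ((Asymptotics.isLittleO_one_iff ℝ).2 hε).mul_isBigO
        (Asymptotics.isBigO_refl w atTop)
      simpa using this
    apply h1.congr' _ (EventuallyEq.refl _ _)
    filter_upwards [eventually_ge_atTop 1] with i hi
    rw [hfw i hi]; ring
  have hsum : (fun n => ∑ i ∈ Finset.range n, (f i - (α + 1) * w i)) =o[atTop]
      (fun n => ∑ i ∈ Finset.range n, w i) := ho.sum_range hw hGdiv
  have hsum' : (fun n => F n - (α + 1) * G n) =o[atTop] G := by
    have := hsum.comp_tendsto (tendsto_add_atTop_nat 1)
    apply this.congr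
    · intro n
      simp only [Function.comp]
      rw [Finset.sum_sub_distrib, ← Finset.mul_sum, ← key f hf0 n, ← key w hw0 n]
    · intro n
      simp only [Function.comp]
      rw [← key w hw0 n]
  have hGpos : ∀ n, 1 ≤ n → 0 < G n := by
    intro n hn
    apply Finset.sum_pos
    · intro j hj
      exact hwpos j (Finset.mem_Icc.mp hj).1
    · exact ⟨1, Finset.mem_Icc.mpr ⟨le_refl 1, hn⟩⟩
  have hten : Tendsto (fun n => (F n - (α + 1) * G n) / G n) atTop (nhds 0) := by
    rw [← Asymptotics.isLittleO_iff_tendsto']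
    · exact hsum'
    · filter_upwards [eventually_ge_atTop 1] with n hn h0
      exact absurd h0 (hGpos n hn).ne'
  have hten2 : Tendsto (fun n => F n / G n) atTop (nhds (α + 1)) := by
    rw [← tendsto_sub_nhds_zero_iff]
    apply hten.congr'
    filter_upwards [eventually_ge_atTop 1] with n hn
    rw [sub_div, mul_div_assoc, div_self (hGpos n hn).ne', mul_one]
  have hα1 : (α + 1) ≠ 0 := by linarith
  have := hten2.div_const (α + 1)
  rw [div_self hα1] at this
  apply this.congr
  intro n
  rw [div_div, mul_comm]
end

section
/- Let φ(λ) = ((α+1)/α)·∑_{k≥1} λ^k/((k+1)!·k) for α > 0, and let ξ be an infinitely divisible random variable with E[e^{λξ}] = e^{φ(λ)} for all λ ∈ ℝ (its Lévy measure is ((α+1)/α)·(1−u)/u du on (0,1]). Then for all c < 1, e^{c·x·ln x}·P(ξ > x) → 0 as x → ∞, and for all c > 1, e^{c·x·ln x}·P(ξ > x) → ∞ as x → ∞. -/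
/-!
Upper bound: Chernoff's inequality at `t = log x`, together with `φ(t) ≤ K (e^t - 1)` for the
cumulant generating function `φ = K · cgfSeries`, `K = (α + 1) / α`.

Lower bound: split `E e^{tξ}` along `ξ > a`, `ξ < b` and `b ≤ ξ ≤ a`. Tilting to `t ± h` bounds
the first two pieces, and when `a`, `b` are the difference quotients of `φ` at `t` shifted by
`± 2 / h`, each of them is at most `e^{φ(t) - 2}`; hence `P(ξ ≥ b) ≥ e^{φ(t) - t a} / 3`. As
`φ' (t) = K (e^t - 1 - t) / t^2`, the choice `t = log x + 2 log log x + O(1)` with `h` small gives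
`b > x` and `t a ≤ c x log x` for any `c > 1`.
-/

open MeasureTheory ProbabilityTheory Filter Real Topology

theorem mul_pow_pred_mul_sub_le_pow_sub_pow {x y : ℝ} (hy : 0 ≤ y) (hyx : y ≤ x) (n : ℕ) :
    n * y ^ (n - 1) * (x - y) ≤ x ^ n - y ^ n := by
  rw [← geom_sum₂_self, ← geom_sum₂_mul]
  gcongr

theorem pow_sub_pow_le_mul_pow_pred_mul {x y : ℝ} (hy : 0 ≤ y) (hyx : y ≤ x) (n : ℕ) :
    x ^ n - y ^ n ≤ n * x ^ (n - 1) * (x - y) := by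
  have hx : 0 ≤ x := hy.trans hyx
  rw [← geom_sum₂_self, ← geom_sum₂_mul]
  gcongr

noncomputable def cgfSeries (t : ℝ) : ℝ :=
  ∑' k : ℕ, t ^ (k + 1) / ((Nat.factorial (k + 2) : ℝ) * (k + 1))

theorem factorial_succ_le_factorial_add_two_mul (k : ℕ) :
    ((k + 1).factorial : ℝ) ≤ (k + 2).factorial * (k + 1) := by
  exact_mod_cast (Nat.factorial_le (by omega)).trans (Nat.le_mul_of_pos_right _ (by omega))

theorem summable_cgfSeries (t : ℝ) :
    Summable fun k : ℕ => t ^ (k + 1) / ((Nat.factorial (k + 2) : ℝ) * (k + 1)) := by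
  refine .of_norm_bounded ((summable_nat_add_iff 1).2 (Real.summable_pow_div_factorial |t|))
    fun k => ?_
  rw [norm_div, norm_pow, Real.norm_eq_abs, Real.norm_of_nonneg (by positivity)]
  gcongr
  exact factorial_succ_le_factorial_add_two_mul k

theorem hasSum_pow_div_factorial_add_two {t : ℝ} (ht : t ≠ 0) :
    HasSum (fun k : ℕ => t ^ k / (k + 2).factorial) ((exp t - 1 - t) / t ^ 2) := by
  have h := (hasSum_nat_add_iff' 2).2 (exp_eq_exp_ℝ ▸ NormedSpace.expSeries_div_hasSum_exp t)
  have hf : (fun k : ℕ => t ^ k / (k + 2).factorial) =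
      fun k : ℕ => t ^ (k + 2) / (k + 2).factorial / t ^ 2 := by
    ext k
    rw [pow_add]
    field_simp
  rw [hf, show exp t - 1 - t = exp t - ∑ i ∈ Finset.range 2, t ^ i / i.factorial by
    simp [Finset.sum_range_succ, sub_sub]]
  exact h.div_const _

theorem cgfSeries_nonneg {t : ℝ} (ht : 0 ≤ t) : 0 ≤ cgfSeries t :=
  tsum_nonneg fun _ => by positivity

theorem cgfSeries_le_exp_sub_one {t : ℝ} (ht : 0 ≤ t) : cgfSeries t ≤ exp t - 1 := by
  have h := (hasSum_nat_add_iff' 1).2 (exp_eq_exp_ℝ ▸ NormedSpace.expSeries_div_hasSum_exp t)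
  simp only [Finset.sum_range_one, pow_zero, Nat.factorial_zero, Nat.cast_one, div_one] at h
  refine hasSum_le (fun k => ?_) (summable_cgfSeries t).hasSum h
  gcongr
  exact factorial_succ_le_factorial_add_two_mul k

theorem cgfSeries_add_sub_le {a h : ℝ} (ha : 0 ≤ a) (hh : 0 < h) :
    cgfSeries (a + h) - cgfSeries a ≤ h * ((exp (a + h) - 1 - (a + h)) / (a + h) ^ 2) := by
  refine hasSum_le (fun k => ?_) ((summable_cgfSeries _).hasSum.sub (summable_cgfSeries a).hasSum)
    ((hasSum_pow_div_factorial_add_two (by positivity)).mul_left h)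
  have := pow_sub_pow_le_mul_pow_pred_mul ha (le_add_of_nonneg_right hh.le) (k + 1)
  rw [← sub_div, div_le_iff₀ (by positivity)]
  push_cast at this
  simp only [add_sub_cancel_left] at this
  calc _ ≤ _ := this
    _ = _ := by field_simp

theorem le_cgfSeries_add_sub {a h : ℝ} (ha : 0 < a) (hh : 0 ≤ h) :
    h * ((exp a - 1 - a) / a ^ 2) ≤ cgfSeries (a + h) - cgfSeries a := by
  refine hasSum_le (fun k => ?_) ((hasSum_pow_div_factorial_add_two ha.ne').mul_left h)
    ((summable_cgfSeries _).hasSum.sub (summable_cgfSeries a).hasSum)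
  have := mul_pow_pred_mul_sub_le_pow_sub_pow ha.le (le_add_of_nonneg_right hh) (k + 1)
  rw [← sub_div, le_div_iff₀ (by positivity)]
  push_cast at this
  simp only [add_sub_cancel_left] at this
  calc _ = _ := by field_simp
    _ ≤ _ := this

section Tilting

variable {Ω : Type*} {m : MeasurableSpace Ω} {μ : Measure Ω} {X : Ω → ℝ}

theorem integrable_exp_mul_of_mgf_pos {t : ℝ} (h : 0 < mgf X μ t) :
    Integrable (fun ω => exp (t * X ω)) μ := by
  by_contra hi
  exact h.ne' (mgf_undef hi)

theorem mgf_le_of_tilt [IsFiniteMeasure μ] (hX : Measurable X) {t h a b : ℝ} (ht : 0 ≤ t)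
    (hh : 0 ≤ h) (hint_add : Integrable (fun ω => exp ((t + h) * X ω)) μ)
    (hint_sub : Integrable (fun ω => exp ((t - h) * X ω)) μ) :
    mgf X μ t ≤ exp (-(h * a)) * mgf X μ (t + h) + exp (h * b) * mgf X μ (t - h) +
      exp (t * a) * μ.real {ω | b ≤ X ω} := by
  have hs : MeasurableSet {ω | b ≤ X ω} := measurableSet_le measurable_const hX
  have hpt : ∀ ω, exp (t * X ω) ≤ exp (-(h * a)) * exp ((t + h) * X ω) +
      exp (h * b) * exp ((t - h) * X ω) + {ω | b ≤ X ω}.indicator (fun _ => exp (t * a)) ω := by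
    intro ω
    simp only [← exp_add]
    have h₁ := (exp_pos (-(h * a) + (t + h) * X ω)).le
    have h₂ := (exp_pos (h * b + (t - h) * X ω)).le
    have h₃ : 0 ≤ {ω | b ≤ X ω}.indicator (fun _ => exp (t * a)) ω :=
      Set.indicator_nonneg (fun _ _ => (exp_pos _).le) ω
    rcases lt_or_ge a (X ω) with hXa | hXa
    · linarith [exp_le_exp.2 (show t * X ω ≤ -(h * a) + (t + h) * X ω by nlinarith)]
    rcases lt_or_ge (X ω) b with hXb | hXb
    · linarith [exp_le_exp.2 (show t * X ω ≤ h * b + (t - h) * X ω by nlinarith)]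
    rw [Set.indicator_of_mem (show ω ∈ {ω | b ≤ X ω} from hXb)]
    linarith [exp_le_exp.2 (mul_le_mul_of_nonneg_left hXa ht)]
  have hint₁ := hint_add.const_mul (exp (-(h * a)))
  have hint₂ := hint_sub.const_mul (exp (h * b))
  calc mgf X μ t ≤ ∫ ω, (exp (-(h * a)) * exp ((t + h) * X ω) + exp (h * b) * exp ((t - h) * X ω) +
        {ω | b ≤ X ω}.indicator (fun _ => exp (t * a)) ω) ∂μ :=
        integral_mono_of_nonneg (ae_of_all _ fun _ => (exp_pos _).le)
          ((hint₁.add hint₂).add ((integrable_const _).indicator hs)) (ae_of_all _ hpt)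
    _ = _ := by
      rw [integral_add _ ((integrable_const _).indicator hs), integral_add hint₁ hint₂,
        integral_const_mul, integral_const_mul, integral_indicator_const _ hs, smul_eq_mul,
        mul_comm (μ.real _)]
      · rfl
      · exact hint₁.add hint₂

noncomputable def upperThreshold (φ : ℝ → ℝ) (t h : ℝ) : ℝ := (φ (t + h) - φ t + 2) / h

noncomputable def lowerThreshold (φ : ℝ → ℝ) (t h : ℝ) : ℝ := (φ t - φ (t - h) - 2) / h

theorem exp_div_three_le_measureReal_ge [IsFiniteMeasure μ] (hX : Measurable X) {φ : ℝ → ℝ}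
    (hφ : ∀ s, mgf X μ s = exp (φ s)) {t h : ℝ} (ht : 0 ≤ t) (hh : 0 < h) :
    exp (φ t - t * upperThreshold φ t h) / 3 ≤ μ.real {ω | lowerThreshold φ t h ≤ X ω} := by
  have hint (s : ℝ) : Integrable (fun ω => exp (s * X ω)) μ :=
    integrable_exp_mul_of_mgf_pos ((hφ s).symm ▸ exp_pos _)
  have key := mgf_le_of_tilt hX ht hh.le (a := upperThreshold φ t h) (b := lowerThreshold φ t h)
    (hint _) (hint _)
  have h_add : exp (-(h * upperThreshold φ t h)) * mgf X μ (t + h) = exp (φ t - 2) := by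
    rw [hφ, ← exp_add, upperThreshold, mul_div_cancel₀ _ hh.ne']
    ring_nf
  have h_sub : exp (h * lowerThreshold φ t h) * mgf X μ (t - h) = exp (φ t - 2) := by
    rw [hφ, ← exp_add, lowerThreshold, mul_div_cancel₀ _ hh.ne']
    ring_nf
  have h_three : exp (φ t - 2) ≤ exp (φ t) / 3 := by
    rw [exp_sub]
    gcongr
    linarith [add_one_le_exp 2]
  rw [h_add, h_sub, hφ] at key
  rw [exp_sub, div_div, div_le_iff₀ (by positivity)]
  linarith

end Tilting

section

variable {K h x L t : ℝ}

theorem upperThreshold_cgfSeries_le (hK : 0 ≤ K) (ht : 0 < t) (hh : 0 < h) :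
    upperThreshold (fun s => K * cgfSeries s) t h ≤ K * (exp h * exp t / t ^ 2) + 2 / h := by
  have hT : (exp (t + h) - 1 - (t + h)) / (t + h) ^ 2 ≤ exp h * exp t / t ^ 2 := by
    rw [← exp_add, add_comm h]
    calc _ ≤ exp (t + h) / (t + h) ^ 2 := by gcongr; linarith
      _ ≤ exp (t + h) / t ^ 2 := by gcongr; linarith
  have hS := (cgfSeries_add_sub_le ht.le hh).trans (mul_le_mul_of_nonneg_left hT hh.le)
  calc upperThreshold (fun s => K * cgfSeries s) t h
      = K * ((cgfSeries (t + h) - cgfSeries t) / h) + 2 / h := by rw [upperThreshold]; ring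
    _ ≤ K * (exp h * exp t / t ^ 2) + 2 / h := by
      gcongr K * ?_ + _
      rw [div_le_iff₀ hh]
      linarith

theorem lowerThreshold_cgfSeries_ge (hK : 0 ≤ K) (hh : 0 < h) (hht : h < t) :
    K * ((exp (-h) * exp t - 1 - t) / t ^ 2) - 2 / h ≤
      lowerThreshold (fun s => K * cgfSeries s) t h := by
  have hT : (exp (-h) * exp t - 1 - t) / t ^ 2 ≤ (exp (t - h) - 1 - (t - h)) / (t - h) ^ 2 := by
    rw [← exp_add, neg_add_eq_sub]
    calc _ ≤ (exp (t - h) - 1 - (t - h)) / t ^ 2 := by gcongr; linarith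
      _ ≤ _ := by
        gcongr
        · linarith [add_one_le_exp (t - h)]
        · linarith
  have hS := le_cgfSeries_add_sub (sub_pos.2 hht) hh.le
  rw [sub_add_cancel] at hS
  calc K * ((exp (-h) * exp t - 1 - t) / t ^ 2) - 2 / h
      ≤ K * ((cgfSeries t - cgfSeries (t - h)) / h) - 2 / h := by
        gcongr K * ?_ - _
        rw [le_div_iff₀ hh]
        linarith [mul_le_mul_of_nonneg_left hT hh.le]
    _ = lowerThreshold (fun s => K * cgfSeries s) t h := by rw [lowerThreshold]; ring

theorem mul_upperThreshold_cgfSeries_le_of_exp_eq {c : ℝ} (hK : 0 ≤ K) (hh : 0 < h)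
    (hx : 0 ≤ x) (hexp : K * exp t = exp (2 * h) * x * L ^ 2) (hL : 0 ≤ L) (hLt : L ≤ t)
    (ht : t ≤ 2 * L) (ht₀ : 0 < t) (hx_large : 4 ≤ (c - exp (3 * h)) * h * x) :
    t * upperThreshold (fun s => K * cgfSeries s) t h ≤ c * x * L := by
  have hc : 0 ≤ c - exp (3 * h) := by
    by_contra! hneg
    nlinarith [mul_nonneg hh.le hx]
  calc t * upperThreshold (fun s => K * cgfSeries s) t h
      ≤ t * (K * (exp h * exp t / t ^ 2) + 2 / h) :=
        mul_le_mul_of_nonneg_left (upperThreshold_cgfSeries_le hK ht₀ hh) ht₀.le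
    _ = exp (3 * h) * x * L * (L / t) + 2 * t / h := by
        rw [show K * (exp h * exp t / t ^ 2) = exp h * (K * exp t) / t ^ 2 by ring, hexp,
          show 3 * h = h + 2 * h by ring, exp_add]
        field_simp
    _ ≤ exp (3 * h) * x * L * 1 + (c - exp (3 * h)) * x * L := by
        gcongr
        · exact div_le_one_of_le₀ hLt ht₀.le
        · rw [div_le_iff₀ hh]
          nlinarith [mul_le_mul_of_nonneg_right hx_large hL]
    _ = c * x * L := by ring

theorem lt_lowerThreshold_cgfSeries_of_exp_eq (hK : 0 ≤ K) (hh : 0 < h) (hx : 0 < x)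
    (hexp : K * exp t = exp (2 * h) * x * L ^ 2) (ht : 2 ≤ t) (hht : h < t)
    (hratio : 1 < exp h * (L / t) ^ 2 - (K + 2 / h) / x) :
    x < lowerThreshold (fun s => K * cgfSeries s) t h := by
  have ht₀ : 0 < t := by linarith
  have hquad : (1 + t) / t ^ 2 ≤ 1 := by
    rw [div_le_one (by positivity)]
    nlinarith
  calc x < x * (exp h * (L / t) ^ 2 - (K + 2 / h) / x) := lt_mul_of_one_lt_right hx hratio
    _ = exp (-h) * (exp (2 * h) * x * L ^ 2) / t ^ 2 - K * 1 - 2 / h := by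
        rw [show 2 * h = h + h by ring, exp_add, exp_neg]
        field_simp
        ring
    _ ≤ exp (-h) * (K * exp t) / t ^ 2 - K * ((1 + t) / t ^ 2) - 2 / h := by
        rw [hexp]
        gcongr
    _ = K * ((exp (-h) * exp t - 1 - t) / t ^ 2) - 2 / h := by ring
    _ ≤ lowerThreshold (fun s => K * cgfSeries s) t h := lowerThreshold_cgfSeries_ge hK hh hht

end

theorem tendsto_log_add_two_mul_log_log_add_div_log (C : ℝ) :
    Tendsto (fun x => (log x + 2 * log (log x) + C) / log x) atTop (𝓝 1) := by
  have hu : Tendsto (fun x => (2 * log (log x) + C) / log x) atTop (𝓝 0) :=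
    ((isLittleO_log_id_atTop.const_mul_left 2).add
      (Asymptotics.isLittleO_const_id_atTop C)).tendsto_div_nhds_zero.comp tendsto_log_atTop
  refine (add_zero (1 : ℝ) ▸ tendsto_const_nhds.add hu).congr' ?_
  filter_upwards [tendsto_log_atTop.eventually_gt_atTop 0] with x hx
  field_simp
  ring

theorem eventually_exists_tilt {K c : ℝ} (hK : 0 < K) (hc : 1 < c) :
    ∀ᶠ x in atTop, ∃ t h, 0 ≤ t ∧ 0 < h ∧
      x < lowerThreshold (fun s => K * cgfSeries s) t h ∧
      t * upperThreshold (fun s => K * cgfSeries s) t h ≤ c * x * log x := by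
  obtain ⟨h, hh, hhc⟩ : ∃ h, 0 < h ∧ exp (3 * h) < c := by
    refine ⟨log c / 4, by have := log_pos hc; positivity, ?_⟩
    calc exp (3 * (log c / 4)) < exp (log c) := exp_lt_exp.2 (by linarith [log_pos hc])
      _ = c := exp_log (by linarith)
  set C := 2 * h - log K
  set t : ℝ → ℝ := fun x => log x + 2 * log (log x) + C with ht_def
  have htL : Tendsto (fun x => t x / log x) atTop (𝓝 1) :=
    tendsto_log_add_two_mul_log_log_add_div_log C
  have hratio : Tendsto (fun x => exp h * (log x / t x) ^ 2 - (K + 2 / h) / x) atTop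
      (𝓝 (exp h)) := by
    simpa using (((htL.inv₀ one_ne_zero).pow 2).const_mul (exp h)).sub
      ((tendsto_const_nhds (x := K + 2 / h)).div_atTop tendsto_id)
  have hcorr : Tendsto (fun x => 2 * log (log x) + C) atTop atTop :=
    tendsto_atTop_add_const_right _ C
      ((tendsto_log_atTop.comp tendsto_log_atTop).const_mul_atTop two_pos)
  filter_upwards [hcorr.eventually_ge_atTop 0, htL.eventually (ge_mem_nhds one_lt_two),
    hratio.eventually (lt_mem_nhds (one_lt_exp_iff.2 hh)),
    tendsto_log_atTop.eventually_gt_atTop (max 2 h),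
    eventually_ge_atTop (4 / ((c - exp (3 * h)) * h)), eventually_gt_atTop 0]
    with x hcorr₀ ht_le hratio_x hlog hx_large hx
  have hL : 0 < log x := by linarith [le_max_left 2 h]
  rw [div_le_iff₀ hL] at ht_le
  have hexp : K * exp (t x) = exp (2 * h) * x * log x ^ 2 := by
    simp only [ht_def, C, exp_add, exp_sub, exp_log hx, exp_log hK, two_mul (log (log x)),
      exp_log hL]
    field_simp
  have hLt : log x ≤ t x := by simp only [ht_def]; linarith
  refine ⟨t x, h, hL.le.trans hLt, hh, ?_, ?_⟩
  · exact lt_lowerThreshold_cgfSeries_of_exp_eq hK.le hh hx hexp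
      (by linarith [le_max_left 2 h]) (by linarith [le_max_right 2 h]) hratio_x
  · refine mul_upperThreshold_cgfSeries_le_of_exp_eq hK.le hh hx.le hexp hL.le hLt
      (by linarith) (by linarith) ?_
    rwa [div_le_iff₀ (mul_pos (sub_pos.2 hhc) hh), mul_comm] at hx_large

section Tails

variable {Ω : Type*} {m : MeasurableSpace Ω} {μ : Measure Ω} [IsFiniteMeasure μ] {X : Ω → ℝ}
  {K : ℝ}

theorem measureReal_lt_le_exp_of_mgf (hK : 0 ≤ K)
    (hmgf : ∀ t, mgf X μ t = exp (K * cgfSeries t)) {x : ℝ} (hx : 1 ≤ x) :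
    μ.real {ω | x < X ω} ≤ exp (K * x - x * log x) := by
  have hL : 0 ≤ log x := log_nonneg hx
  have hS : cgfSeries (log x) ≤ x - 1 := by
    simpa [exp_log (by linarith : 0 < x)] using cgfSeries_le_exp_sub_one hL
  calc μ.real {ω | x < X ω} ≤ μ.real {ω | x ≤ X ω} :=
        measureReal_mono (Set.ofPred_subset_ofPred.2 fun _ => le_of_lt)
    _ ≤ exp (-log x * x) * mgf X μ (log x) :=
        measure_ge_le_exp_mul_mgf x hL (integrable_exp_mul_of_mgf_pos (by rw [hmgf]; positivity))
    _ ≤ exp (K * x - x * log x) := by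
        rw [hmgf, ← exp_add]
        gcongr
        nlinarith

theorem eventually_exp_le_measureReal_lt (hK : 0 < K) (hX : Measurable X)
    (hmgf : ∀ t, mgf X μ t = exp (K * cgfSeries t)) {c : ℝ} (hc : 1 < c) :
    ∀ᶠ x in atTop, exp (-(c * x * log x)) / 3 ≤ μ.real {ω | x < X ω} := by
  filter_upwards [eventually_exists_tilt hK hc] with x ⟨t, h, ht, hh, hlow, hup⟩
  calc exp (-(c * x * log x)) / 3
      ≤ exp (K * cgfSeries t - t * upperThreshold (fun s => K * cgfSeries s) t h) / 3 := by
        gcongr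
        nlinarith [cgfSeries_nonneg ht]
    _ ≤ μ.real {ω | lowerThreshold (fun s => K * cgfSeries s) t h ≤ X ω} :=
        exp_div_three_le_measureReal_ge hX hmgf ht hh
    _ ≤ μ.real {ω | x < X ω} := measureReal_mono fun _ => hlow.trans_le

theorem tendsto_exp_mul_log_mul_measureReal_zero_of_lt_one (hK : 0 ≤ K)
    (hmgf : ∀ t, mgf X μ t = exp (K * cgfSeries t)) {c : ℝ} (hc : c < 1) :
    Tendsto (fun x => exp (c * x * log x) * μ.real {ω | x < X ω}) atTop (𝓝 0) := by
  have hbound : ∀ᶠ x in atTop, exp (c * x * log x) * μ.real {ω | x < X ω} ≤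
      exp (x * ((c - 1) * log x + K)) := by
    filter_upwards [eventually_ge_atTop 1] with x hx
    calc _ ≤ exp (c * x * log x) * exp (K * x - x * log x) := by
          gcongr
          exact measureReal_lt_le_exp_of_mgf hK hmgf hx
      _ = exp (x * ((c - 1) * log x + K)) := by rw [← exp_add]; ring_nf
  refine squeeze_zero' (Eventually.of_forall fun x => by positivity) hbound ?_
  exact tendsto_exp_atBot.comp (tendsto_id.atTop_mul_atBot₀ (tendsto_atBot_add_const_right _ K
    (tendsto_log_atTop.const_mul_atTop_of_neg (by linarith))))

theorem tendsto_exp_mul_log_mul_measureReal_atTop_of_one_lt (hK : 0 < K) (hX : Measurable X)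
    (hmgf : ∀ t, mgf X μ t = exp (K * cgfSeries t)) {c : ℝ} (hc : 1 < c) :
    Tendsto (fun x => exp (c * x * log x) * μ.real {ω | x < X ω}) atTop atTop := by
  obtain ⟨c', hc', hc'c⟩ := exists_between hc
  have hgrowth : Tendsto (fun x => exp ((c - c') * (x * log x)) / 3) atTop atTop :=
    (tendsto_exp_atTop.comp ((tendsto_id.atTop_mul_atTop₀ tendsto_log_atTop).const_mul_atTop
      (sub_pos.2 hc'c))).atTop_div_const three_pos
  refine tendsto_atTop_mono' _ ?_ hgrowth
  filter_upwards [eventually_exp_le_measureReal_lt hK hX hmgf hc'] with x hx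
  calc exp ((c - c') * (x * log x)) / 3 = exp (c * x * log x) * (exp (-(c' * x * log x)) / 3) := by
        rw [mul_div_assoc', ← exp_add]
        ring_nf
    _ ≤ exp (c * x * log x) * μ.real {ω | x < X ω} := by gcongr

end Tails

theorem stmt_8_general (Ω : Type*) [MeasureSpace Ω] [IsProbabilityMeasure (ℙ : Measure Ω)]
    (α : ℝ) (hα : 0 < α) (ξ : Ω → ℝ) (hmeas : Measurable ξ)
    (hmgf : ∀ lam : ℝ, ∫ ω, Real.exp (lam * ξ ω) ∂ℙ =
      Real.exp (((α + 1) / α) *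
        ∑' k : ℕ, lam ^ (k + 1) / ((Nat.factorial (k + 2) : ℝ) * (k + 1)))) :
    (∀ c : ℝ, c < 1 →
      Tendsto (fun x : ℝ => Real.exp (c * x * Real.log x) * (ℙ {ω | x < ξ ω}).toReal)
        atTop (nhds 0)) ∧
    (∀ c : ℝ, 1 < c →
      Tendsto (fun x : ℝ => Real.exp (c * x * Real.log x) * (ℙ {ω | x < ξ ω}).toReal)
        atTop atTop) := by
  have hK : 0 < (α + 1) / α := by positivity
  have hmgf' : ∀ t, mgf ξ ℙ t = exp ((α + 1) / α * cgfSeries t) := hmgf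
  exact ⟨fun c hc => tendsto_exp_mul_log_mul_measureReal_zero_of_lt_one hK.le hmgf' hc,
    fun c hc => tendsto_exp_mul_log_mul_measureReal_atTop_of_one_lt hK hmeas hmgf' hc⟩

theorem stmt_8 (Ω : Type*) [MeasureSpace Ω] [IsProbabilityMeasure (ℙ : Measure Ω)]
    (α : ℝ) (hα : 0 < α) (ξ : Ω → ℝ) (hmeas : Measurable ξ)
    (hnonneg : ∀ ω, 0 ≤ ξ ω)
    (hmgf : ∀ lam : ℝ, ∫ ω, Real.exp (lam * ξ ω) ∂ℙ =
      Real.exp (((α + 1) / α) *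
        ∑' k : ℕ, lam ^ (k + 1) / ((Nat.factorial (k + 2) : ℝ) * (k + 1)))) :
    (∀ c : ℝ, c < 1 →
      Tendsto (fun x : ℝ => Real.exp (c * x * Real.log x) * (ℙ {ω | x < ξ ω}).toReal)
        atTop (nhds 0)) ∧
    (∀ c : ℝ, 1 < c →
      Tendsto (fun x : ℝ => Real.exp (c * x * Real.log x) * (ℙ {ω | x < ξ ω}).toReal)
        atTop atTop) :=
  stmt_8_general Ω α hα ξ hmeas hmgf
end

section
/- Let ξ_1, …, ξ_n be i.i.d. nonnegative random variables satisfying: for all c < 1, e^{c x ln x}·P(ξ_1 > x) → 0 as x → ∞, and for all c > 1, e^{c x ln x}·P(ξ_1 > x) → ∞. Then max(ξ_1,…,ξ_n)·ln(ln n)/ln n converges in probability to 1 as n → ∞. -/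
/-!
Write `p x = ℙ(ξ₀ > x)` and `a_n = k log n / log log n`, so that `a_n log a_n ~ k log n`. The tail
hypotheses then give `n p(a_n) → 0` for `k > 1` and `n p(a_n) → ∞` for `0 < k < 1`. The union
bound `ℙ(max > a_n) ≤ n p(a_n)` and independence, `ℙ(max ≤ a_n) = (1 - p(a_n))ⁿ ≤ exp(-n p(a_n))`,
applied at `k = 1 ± ε`, bound both tails of `max · log log n / log n - 1`.
-/

open MeasureTheory ProbabilityTheory Filter Topology Real

section Asymptotics

lemma tendsto_div_log_atTop : Tendsto (fun x : ℝ => x / log x) atTop atTop := by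
  refine ((tendsto_exp_div_pow_atTop 1).comp tendsto_log_atTop).congr' ?_
  filter_upwards [eventually_gt_atTop 0] with x hx
  simp [exp_log hx]

lemma tendsto_log_natCast_atTop : Tendsto (fun n : ℕ => log n) atTop atTop :=
  tendsto_log_atTop.comp tendsto_natCast_atTop_atTop

lemma tendsto_log_log_natCast_atTop : Tendsto (fun n : ℕ => log (log n)) atTop atTop :=
  tendsto_log_atTop.comp tendsto_log_natCast_atTop

noncomputable def threshold (k : ℝ) (n : ℕ) : ℝ := k * log n / log (log n)

lemma tendsto_threshold_atTop {k : ℝ} (hk : 0 < k) : Tendsto (threshold k) atTop atTop := by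
  have h := (tendsto_div_log_atTop.comp tendsto_log_natCast_atTop).const_mul_atTop hk
  exact h.congr fun n => (mul_div_assoc _ _ _).symm

lemma tendsto_threshold_mul_log_div_log {k : ℝ} (hk : 0 < k) :
    Tendsto (fun n => threshold k n * log (threshold k n) / log n) atTop (𝓝 k) := by
  have hL := tendsto_log_log_natCast_atTop
  have hlim : Tendsto (fun n : ℕ =>
      k * (1 + log k / log (log n) - log (log (log n)) / log (log n)))
      atTop (𝓝 (k * (1 + 0 - 0))) :=
    tendsto_const_nhds.mul ((tendsto_const_nhds.add (tendsto_const_nhds.div_atTop hL)).sub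
      (isLittleO_log_id_atTop.tendsto_div_nhds_zero.comp hL))
  rw [add_zero, sub_zero, mul_one] at hlim
  refine hlim.congr' ?_
  filter_upwards [tendsto_log_natCast_atTop.eventually_gt_atTop 1] with n hn
  have hlog : (0 : ℝ) < log n := by linarith
  have hloglog : 0 < log (log n) := log_pos hn
  simp only [threshold]
  rw [log_div (by positivity) hloglog.ne', log_mul hk.ne' hlog.ne']
  field_simp
  ring

lemma lt_threshold_or_le_threshold {ε M : ℝ} {n : ℕ} (hn : 1 < log n)
    (h : ε < |M * log (log n) / log n - 1|) :
    threshold (1 + ε) n < M ∨ M ≤ threshold (1 - ε) n := by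
  have hlog : 0 < log n := by linarith
  have hloglog : 0 < log (log n) := log_pos hn
  unfold threshold
  rcases lt_abs.1 h with h | h
  · left
    rw [div_lt_iff₀ hloglog, ← lt_div_iff₀ hlog]
    linarith
  · right
    rw [le_div_iff₀ hloglog, ← div_le_iff₀ hlog]
    linarith

variable {y : ℕ → ℝ} {L : ℝ}

lemma eventually_log_le_of_tendsto_div_log (hy : Tendsto (fun n => y n / log n) atTop (𝓝 L))
    (hL : 1 < L) : ∀ᶠ n : ℕ in atTop, log n ≤ y n := by
  filter_upwards [hy.eventually_const_le hL, tendsto_log_natCast_atTop.eventually_gt_atTop 0]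
    with n h hlog
  exact (one_le_div₀ hlog).1 h

lemma tendsto_log_sub_of_tendsto_div_log (hy : Tendsto (fun n => y n / log n) atTop (𝓝 L))
    (hL : L < 1) : Tendsto (fun n : ℕ => log n - y n) atTop atTop := by
  have h := tendsto_log_natCast_atTop.atTop_mul_pos (sub_pos.2 hL) (tendsto_const_nhds.sub hy)
  refine h.congr' ?_
  filter_upwards [tendsto_log_natCast_atTop.eventually_gt_atTop 0] with n hlog
  field_simp

end Asymptotics

section Tail

variable {p : ℝ → ℝ} {x : ℕ → ℝ} {k : ℝ}

/-- `c = (1 + k) / (2k)` lies on the other side of `1` from `k`, while `c k = (1 + k) / 2` stays on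
the same side. -/
lemma tendsto_mul_log_div_log_mul_const (hk : 0 < k)
    (hxk : Tendsto (fun n => x n * log (x n) / log n) atTop (𝓝 k)) :
    Tendsto (fun n => (1 + k) / (2 * k) * x n * log (x n) / log n) atTop (𝓝 ((1 + k) / 2)) := by
  have h := hxk.const_mul ((1 + k) / (2 * k))
  rw [show (1 + k) / (2 * k) * k = (1 + k) / 2 by field_simp] at h
  exact h.congr fun n => by ring

lemma tendsto_natCast_mul_tail_nhds_zero (hp : ∀ t, 0 ≤ p t)
    (htail : ∀ c < 1, Tendsto (fun t => exp (c * t * log t) * p t) atTop (𝓝 0))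
    (hx : Tendsto x atTop atTop) (hk : 1 < k)
    (hxk : Tendsto (fun n => x n * log (x n) / log n) atTop (𝓝 k)) :
    Tendsto (fun n : ℕ => n * p (x n)) atTop (𝓝 0) := by
  have hc : (1 + k) / (2 * k) < 1 := by rw [div_lt_one (by linarith)]; linarith
  refine squeeze_zero' (Eventually.of_forall fun n => by have := hp (x n); positivity)
    ?_ ((htail _ hc).comp hx)
  filter_upwards [eventually_log_le_of_tendsto_div_log
    (tendsto_mul_log_div_log_mul_const (by linarith) hxk) (by linarith),
    eventually_gt_atTop 0] with n hlog hn
  calc (n : ℝ) * p (x n) = exp (log n) * p (x n) := by rw [exp_log (by exact_mod_cast hn)]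
    _ ≤ _ := mul_le_mul_of_nonneg_right (exp_le_exp.2 hlog) (hp _)

lemma tendsto_natCast_mul_tail_atTop
    (htail : ∀ c, 1 < c → Tendsto (fun t => exp (c * t * log t) * p t) atTop atTop)
    (hx : Tendsto x atTop atTop) (hk₀ : 0 < k) (hk : k < 1)
    (hxk : Tendsto (fun n => x n * log (x n) / log n) atTop (𝓝 k)) :
    Tendsto (fun n : ℕ => n * p (x n)) atTop atTop := by
  have hc : 1 < (1 + k) / (2 * k) := by rw [one_lt_div (by linarith)]; linarith
  have hgap := tendsto_exp_atTop.comp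
    (tendsto_log_sub_of_tendsto_div_log (tendsto_mul_log_div_log_mul_const hk₀ hxk) (by linarith))
  refine (hgap.atTop_mul_atTop₀ ((htail _ hc).comp hx)).congr' ?_
  filter_upwards [eventually_gt_atTop 0] with n hn
  simp only [Function.comp_apply]
  rw [← mul_assoc, ← exp_add, sub_add_cancel, exp_log (by exact_mod_cast hn)]

end Tail

section MaxOfIid

variable {Ω : Type*} [MeasurableSpace Ω] {μ : Measure Ω} {ξ : ℕ → Ω → ℝ}

lemma measureReal_lt_iSup_le_sum [IsFiniteMeasure μ] {ι : Type*} [Fintype ι] [Nonempty ι]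
    (f : ι → Ω → ℝ) (x : ℝ) :
    μ.real {ω | x < ⨆ i, f i ω} ≤ ∑ i, μ.real {ω | x < f i ω} := by
  refine (measureReal_mono fun ω hω => ?_).trans (measureReal_iUnion_fintype_le _)
  obtain ⟨i, hi⟩ := exists_lt_of_lt_ciSup (show x < ⨆ i, f i ω from hω)
  exact Set.mem_iUnion.2 ⟨i, hi⟩

lemma measureReal_lt_iSup_fin_le [IsFiniteMeasure μ] (hid : ∀ i, IdentDistrib (ξ i) (ξ 0) μ μ)
    {n : ℕ} (hn : n ≠ 0) (x : ℝ) :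
    μ.real {ω | x < ⨆ i : Fin n, ξ i ω} ≤ n * μ.real {ω | x < ξ 0 ω} := by
  have : Nonempty (Fin n) := Fin.pos_iff_nonempty.1 (Nat.pos_of_ne_zero hn)
  have hsame (i : ℕ) : μ.real {ω | x < ξ i ω} = μ.real {ω | x < ξ 0 ω} :=
    congrArg ENNReal.toReal ((hid i).measure_mem_eq measurableSet_Ioi)
  calc μ.real {ω | x < ⨆ i : Fin n, ξ i ω} ≤ ∑ i : Fin n, μ.real {ω | x < ξ i ω} :=
        measureReal_lt_iSup_le_sum _ x
    _ = n * μ.real {ω | x < ξ 0 ω} := by simp [hsame]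

lemma measure_iSup_fin_le_eq_pow (hind : iIndepFun ξ μ) (hid : ∀ i, IdentDistrib (ξ i) (ξ 0) μ μ)
    {n : ℕ} (hn : n ≠ 0) (x : ℝ) :
    μ {ω | (⨆ i : Fin n, ξ i ω) ≤ x} = μ {ω | ξ 0 ω ≤ x} ^ n := by
  have : Nonempty (Fin n) := Fin.pos_iff_nonempty.1 (Nat.pos_of_ne_zero hn)
  have hset : {ω | (⨆ i : Fin n, ξ i ω) ≤ x} = ⋂ i ∈ Finset.range n, ξ i ⁻¹' Set.Iic x := by
    ext ω
    simp only [Set.mem_ofPred_eq, ciSup_le_iff (Set.finite_range _).bddAbove, Set.mem_iInter,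
      Set.mem_preimage, Set.mem_Iic, Finset.mem_range]
    exact ⟨fun h i hi => h ⟨i, hi⟩, fun h i => h i i.2⟩
  rw [hset, hind.measure_inter_preimage_eq_mul _ fun _ _ => measurableSet_Iic,
    Finset.prod_congr rfl fun i _ => (hid i).measure_mem_eq measurableSet_Iic,
    Finset.prod_const, Finset.card_range]
  rfl

lemma measureReal_iSup_fin_le_le_exp [IsProbabilityMeasure μ] (hind : iIndepFun ξ μ)
    (hid : ∀ i, IdentDistrib (ξ i) (ξ 0) μ μ) (hmeas : Measurable (ξ 0)) {n : ℕ} (hn : n ≠ 0)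
    (x : ℝ) :
    μ.real {ω | (⨆ i : Fin n, ξ i ω) ≤ x} ≤ exp (-(n * μ.real {ω | x < ξ 0 ω})) := by
  have hcompl : μ.real {ω | ξ 0 ω ≤ x} = 1 - μ.real {ω | x < ξ 0 ω} := by
    rw [← probReal_compl_eq_one_sub (s := {ω | x < ξ 0 ω}) (hmeas measurableSet_Ioi)]
    congr 1
    ext ω
    simp
  rw [Measure.real, measure_iSup_fin_le_eq_pow hind hid hn, ENNReal.toReal_pow, ← Measure.real,
    hcompl]
  calc (1 - μ.real {ω | x < ξ 0 ω}) ^ n ≤ exp (-μ.real {ω | x < ξ 0 ω}) ^ n :=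
        pow_le_pow_left₀ (sub_nonneg.2 measureReal_le_one) (one_sub_le_exp_neg _) n
    _ = exp (-(n * μ.real {ω | x < ξ 0 ω})) := by rw [← exp_nat_mul]; ring_nf

lemma tendsto_measureReal_abs_sub_one_gt [IsProbabilityMeasure μ] (hmeas : Measurable (ξ 0))
    (hind : iIndepFun ξ μ) (hid : ∀ i, IdentDistrib (ξ i) (ξ 0) μ μ)
    (htail0 : ∀ c < 1,
      Tendsto (fun x => exp (c * x * log x) * μ.real {ω | x < ξ 0 ω}) atTop (𝓝 0))
    (htailTop : ∀ c, 1 < c →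
      Tendsto (fun x => exp (c * x * log x) * μ.real {ω | x < ξ 0 ω}) atTop atTop)
    {ε : ℝ} (hε : 0 < ε) (hε₁ : ε < 1) :
    Tendsto (fun n : ℕ => μ.real {ω | ε < |(⨆ i : Fin n, ξ i ω) * log (log n) / log n - 1|})
      atTop (𝓝 0) := by
  have hupper := tendsto_natCast_mul_tail_nhds_zero (fun _ => measureReal_nonneg) htail0
    (tendsto_threshold_atTop (by linarith)) (by linarith)
    (tendsto_threshold_mul_log_div_log (k := 1 + ε) (by linarith))
  have hlower := tendsto_natCast_mul_tail_atTop htailTop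
    (tendsto_threshold_atTop (by linarith)) (by linarith) (by linarith)
    (tendsto_threshold_mul_log_div_log (k := 1 - ε) (by linarith))
  have hbound := hupper.add (tendsto_exp_atBot.comp (tendsto_neg_atTop_atBot.comp hlower))
  rw [zero_add] at hbound
  refine squeeze_zero' (Eventually.of_forall fun _ => measureReal_nonneg) ?_ hbound
  filter_upwards [tendsto_log_natCast_atTop.eventually_gt_atTop 1, eventually_ne_atTop 0]
    with n hlog hn
  calc _ ≤ μ.real ({ω | threshold (1 + ε) n < ⨆ i : Fin n, ξ i ω} ∪
        {ω | (⨆ i : Fin n, ξ i ω) ≤ threshold (1 - ε) n}) :=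
        measureReal_mono fun ω hω => lt_threshold_or_le_threshold hlog hω
    _ ≤ _ := (measureReal_union_le _ _).trans (add_le_add (measureReal_lt_iSup_fin_le hid hn _)
        (measureReal_iSup_fin_le_le_exp hind hid hmeas hn _))

end MaxOfIid

theorem stmt_9_general (Ω : Type*) [MeasureSpace Ω] [IsProbabilityMeasure (ℙ : Measure Ω)]
    (ξ : ℕ → Ω → ℝ) (hmeas : ∀ i, Measurable (ξ i))
    (hIndep : iIndepFun ξ ℙ)
    (hident : ∀ i, Measure.map (ξ i) ℙ = Measure.map (ξ 0) ℙ)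
    (htail0 : ∀ c : ℝ, c < 1 →
      Tendsto (fun x : ℝ => Real.exp (c * x * Real.log x) * (ℙ {ω | x < ξ 0 ω}).toReal)
        atTop (nhds 0))
    (htailTop : ∀ c : ℝ, 1 < c →
      Tendsto (fun x : ℝ => Real.exp (c * x * Real.log x) * (ℙ {ω | x < ξ 0 ω}).toReal)
        atTop atTop) :
    ∀ ε : ℝ, 0 < ε →
      Tendsto (fun n : ℕ =>
          (ℙ {ω | ε < |(⨆ i : Fin n, ξ i ω) * Real.log (Real.log n) / Real.log n - 1|}).toReal)
        atTop (nhds 0) := by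
  intro ε hε
  have hid (i : ℕ) : IdentDistrib (ξ i) (ξ 0) ℙ ℙ :=
    ⟨(hmeas i).aemeasurable, (hmeas 0).aemeasurable, hident i⟩
  -- `ε` is shrunk below `1` so that the lower threshold `(1 - ε) log n / log log n` is positive.
  have hsmall := tendsto_measureReal_abs_sub_one_gt (μ := ℙ) (hmeas 0) hIndep hid htail0 htailTop
    (lt_min hε one_half_pos) (min_lt_of_right_lt one_half_lt_one)
  exact squeeze_zero (fun _ => ENNReal.toReal_nonneg) (fun n => measureReal_mono
    (Set.ofPred_subset_ofPred.2 fun ω hω => (min_le_left _ _).trans_lt hω)) hsmall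

theorem stmt_9 (Ω : Type*) [MeasureSpace Ω] [IsProbabilityMeasure (ℙ : Measure Ω)]
    (ξ : ℕ → Ω → ℝ) (hmeas : ∀ i, Measurable (ξ i))
    (hIndep : iIndepFun ξ ℙ)
    (hident : ∀ i, Measure.map (ξ i) ℙ = Measure.map (ξ 0) ℙ)
    (hnonneg : ∀ i ω, 0 ≤ ξ i ω)
    (htail0 : ∀ c : ℝ, c < 1 →
      Tendsto (fun x : ℝ => Real.exp (c * x * Real.log x) * (ℙ {ω | x < ξ 0 ω}).toReal)
        atTop (nhds 0))
    (htailTop : ∀ c : ℝ, 1 < c →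
      Tendsto (fun x : ℝ => Real.exp (c * x * Real.log x) * (ℙ {ω | x < ξ 0 ω}).toReal)
        atTop atTop) :
    ∀ ε : ℝ, 0 < ε →
      Tendsto (fun n : ℕ =>
          (ℙ {ω | ε < |(⨆ i : Fin n, ξ i ω) * Real.log (Real.log n) / Real.log n - 1|}).toReal)
        atTop (nhds 0) :=
  stmt_9_general Ω ξ hmeas hIndep hident htail0 htailTop
end

section
/- Let h(u) = 1 + (e^u − 1)/u for u ≠ 0 and h(0) = 2. Then the function u ↦ h'(u)/h(u) (with value 1/4 at 0) is a strictly increasing bijection from ℝ onto (0,1). -/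
/-!
Away from `0`, `h'/h = N/D` with `N = u e^u - e^u + 1 = u² h'` and `D = u (u + e^u - 1) = u² h`.
From `e^{-u} > 1 - u` and `e^u > 1 + u` we get `0 < N < D`, so `h'/h` lies in `(0,1)`, and it
tends to `0` at `-∞` and to `1` at `+∞`. The derivative of `N/D` is `W/D²` with
`W = N' D - N D'`. As a function of `t = e^u` (for `u < 0`, of `t = e^{-u}` after multiplying
by `t²`), `W` is a quadratic that is increasing beyond a Taylor polynomial `s ≤ t` of the
exponential, and its value at `s` is `u⁴` times a polynomial with positive coefficients; hence
`W > 0` for `u ≠ 0`. At `0`, L'Hôpital gives `N/u² → 1/2`, so `h'` is continuous with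
`h'(0) = 1/2`, and `h'/h` is continuous. Continuity, strict monotonicity and the limits at `±∞`
give the bijection.
-/

open Real Filter Set Topology

lemma Continuous.Ioo_subset_range_of_tendsto {X α : Type*} [TopologicalSpace X]
    [PreconnectedSpace X] [LinearOrder α] [TopologicalSpace α] [OrderClosedTopology α]
    {l₁ l₂ : Filter X} [l₁.NeBot] [l₂.NeBot] {f : X → α} {a b : α} (hf : Continuous f)
    (ha : Tendsto f l₁ (𝓝 a)) (hb : Tendsto f l₂ (𝓝 b)) : Ioo a b ⊆ range f := by
  intro y hy
  obtain ⟨x₁, hx₁⟩ := (ha.eventually_lt_const hy.1).exists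
  obtain ⟨x₂, hx₂⟩ := (hb.eventually_const_lt hy.2).exists
  exact intermediate_value_univ x₁ x₂ hf ⟨hx₁.le, hx₂.le⟩

lemma taylor_five_le_exp {u : ℝ} (hu : 0 ≤ u) :
    1 + u + u ^ 2 / 2 + u ^ 3 / 6 + u ^ 4 / 24 + u ^ 5 / 120 ≤ exp u := by
  have := sum_le_exp_of_nonneg hu 6
  norm_num [Finset.sum_range_succ, Nat.factorial] at this
  linarith

lemma tendsto_exp_sub_one_div_nhdsNE :
    Tendsto (fun u => (exp u - 1) / u) (𝓝[≠] 0) (𝓝 1) := by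
  simpa [div_eq_inv_mul] using (hasDerivAt_exp 0).tendsto_slope_zero

namespace OneAddExpSlope

/-- `u² h'(u)` for `u ≠ 0`. -/
noncomputable def num (u : ℝ) : ℝ := u * exp u - exp u + 1

/-- `u² h(u)` for `u ≠ 0`. -/
noncomputable def den (u : ℝ) : ℝ := u * (u + exp u - 1)

/-- `num' * den - num * den'`, the numerator of the derivative of `num / den`. -/
noncomputable def wronskian (u : ℝ) : ℝ :=
  exp u * (u ^ 3 - 3 * u ^ 2 + 2 * u) + (exp u - 1) ^ 2 - 2 * u

lemma hasDerivAt_num (u : ℝ) : HasDerivAt num (u * exp u) u :=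
  ((((hasDerivAt_id' u).mul (hasDerivAt_exp u)).sub (hasDerivAt_exp u)).add_const 1).congr_deriv
    (by ring)

lemma hasDerivAt_den (u : ℝ) : HasDerivAt den (2 * u + exp u - 1 + u * exp u) u :=
  ((hasDerivAt_id' u).fun_mul
    (((hasDerivAt_id' u).fun_add (hasDerivAt_exp u)).sub_const 1)).congr_deriv (by ring)

lemma num_pos {u : ℝ} (hu : u ≠ 0) : 0 < num u := by
  have key : num u = exp u * (exp (-u) - (-u + 1)) := by
    rw [num, exp_neg]; field_simp; ring
  rw [key]
  exact mul_pos (exp_pos u) (sub_pos.2 (add_one_lt_exp (neg_ne_zero.2 hu)))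

lemma num_lt_den {u : ℝ} (hu : u ≠ 0) : num u < den u := by
  unfold num den
  nlinarith [add_one_lt_exp hu, sq_pos_of_ne_zero hu]

lemma den_pos {u : ℝ} (hu : u ≠ 0) : 0 < den u := (num_pos hu).trans (num_lt_den hu)

lemma tendsto_num_div_sq_nhdsNE :
    Tendsto (fun u => num u / u ^ 2) (𝓝[≠] 0) (𝓝 (1 / 2)) := by
  have hsq (u : ℝ) : HasDerivAt (fun u => u ^ 2) (2 * u) u := by
    simpa using hasDerivAt_pow 2 u
  refine HasDerivAt.lhopital_zero_nhdsNE (Eventually.of_forall hasDerivAt_num)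
    (Eventually.of_forall hsq)
    (eventually_mem_nhdsWithin.mono fun u hu => mul_ne_zero two_ne_zero hu) ?_ ?_ ?_
  · simpa [num] using (hasDerivAt_num 0).continuousAt.tendsto.mono_left nhdsWithin_le_nhds
  · simpa using (hsq 0).continuousAt.tendsto.mono_left nhdsWithin_le_nhds
  · refine (tendsto_exp_nhds_zero_nhds_one.mono_left nhdsWithin_le_nhds).div_const 2 |>.congr' ?_
    filter_upwards [self_mem_nhdsWithin] with u (hu : u ≠ 0)
    field_simp

lemma hasDerivAt_num_div_den {u : ℝ} (hu : u ≠ 0) :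
    HasDerivAt (fun x => num x / den x) (wronskian u / den u ^ 2) u :=
  ((hasDerivAt_num u).div (hasDerivAt_den u) (den_pos hu).ne').congr_deriv
    (by unfold num den wronskian; ring)

lemma wronskian_pos_of_pos {u : ℝ} (hu : 0 < u) : 0 < wronskian u := by
  set s := 1 + u + u ^ 2 / 2 + u ^ 3 / 6 + u ^ 4 / 24 with hs_def
  have hs : s ≤ exp u := by rw [hs_def]; linarith [taylor_five_le_exp hu.le, pow_pos hu 5]
  have hQs : 0 < s * (u ^ 3 - 3 * u ^ 2 + 2 * u) + (s - 1) ^ 2 - 2 * u := by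
    have : s * (u ^ 3 - 3 * u ^ 2 + 2 * u) + (s - 1) ^ 2 - 2 * u
        = u ^ 4 * (5 / 12 + u / 3 + u ^ 2 / 9 + u ^ 3 / 18 + u ^ 4 / 576) := by ring
    rw [this]; positivity
  have hslope : 0 ≤ 2 * s + (u ^ 3 - 3 * u ^ 2 + 2 * u) - 2 := by
    rw [hs_def]
    nlinarith [mul_nonneg hu.le (sq_nonneg (u - 3 / 4)), pow_pos hu 4]
  unfold wronskian
  nlinarith [mul_nonneg (sub_nonneg.2 hs) hslope, sq_nonneg (exp u - s)]

lemma wronskian_pos_of_neg {u : ℝ} (hu : u < 0) : 0 < wronskian u := by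
  obtain ⟨v, hv, rfl⟩ : ∃ v, 0 < v ∧ u = -v := ⟨-u, by linarith, by ring⟩
  set t := exp v
  set s := 1 + v + v ^ 2 / 2 + v ^ 3 / 6 + v ^ 4 / 24 + v ^ 5 / 120 with hs_def
  have hs : s ≤ t := taylor_five_le_exp hv.le
  have hWs : 0 < (1 - s) ^ 2 + 2 * v * s ^ 2 - (v ^ 3 + 3 * v ^ 2 + 2 * v) * s := by
    have : (1 - s) ^ 2 + 2 * v * s ^ 2 - (v ^ 3 + 3 * v ^ 2 + 2 * v) * s
        = v ^ 4 * (5 / 12 + v / 2 + 14 * v ^ 2 / 45 + 23 * v ^ 3 / 180 + 13 * v ^ 4 / 320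
          + 7 * v ^ 5 / 720 + 7 * v ^ 6 / 4800 + v ^ 7 / 7200) := by ring
    rw [this]; positivity
  have hslope : 0 ≤ 2 * (1 + 2 * v) * s - (2 + v ^ 3 + 3 * v ^ 2 + 2 * v) := by
    rw [hs_def]
    nlinarith [pow_pos hv 2, pow_pos hv 3, pow_pos hv 4, pow_pos hv 5, pow_pos hv 6]
  have hW : 0 < (1 - t) ^ 2 + 2 * v * t ^ 2 - (v ^ 3 + 3 * v ^ 2 + 2 * v) * t := by
    nlinarith [mul_nonneg (sub_nonneg.2 hs) hslope,
      mul_nonneg (by linarith : (0 : ℝ) ≤ 1 + 2 * v) (sq_nonneg (t - s))]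
  have ht : 0 < t := exp_pos v
  have : wronskian (-v)
      = ((1 - t) ^ 2 + 2 * v * t ^ 2 - (v ^ 3 + 3 * v ^ 2 + 2 * v) * t) / t ^ 2 := by
    rw [wronskian, exp_neg]; field_simp; ring
  rw [this]; positivity

lemma wronskian_pos {u : ℝ} (hu : u ≠ 0) : 0 < wronskian u :=
  hu.lt_or_gt.elim wronskian_pos_of_neg wronskian_pos_of_pos

lemma tendsto_num_div_den_atTop : Tendsto (fun u => num u / den u) atTop (𝓝 1) := by
  have hinv : Tendsto (fun u : ℝ => u⁻¹) atTop (𝓝 0) := tendsto_inv_atTop_zero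
  have hexp : Tendsto (fun u : ℝ => exp (-u)) atTop (𝓝 0) := tendsto_exp_neg_atTop_nhds_zero
  have hmul : Tendsto (fun u : ℝ => u * exp (-u)) atTop (𝓝 0) := by
    simpa using tendsto_pow_mul_exp_neg_atTop_nhds_zero 1
  have := ((hinv.const_sub 1).add (hinv.mul hexp)).div ((hmul.add_const 1).sub hexp)
    (by norm_num)
  simp only [sub_zero, add_zero, mul_zero, zero_add, div_one] at this
  refine this.congr' ?_
  filter_upwards [eventually_gt_atTop 0] with u hu
  simp only [Pi.div_apply, num, den, exp_neg]
  field_simp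

lemma tendsto_num_div_den_atBot : Tendsto (fun u => num u / den u) atBot (𝓝 0) := by
  have hmul : Tendsto (fun u => u * exp u) atBot (𝓝 0) := by
    have := (tendsto_pow_mul_exp_neg_atTop_nhds_zero 1).neg.comp tendsto_neg_atBot_atTop
    simpa [Function.comp_def] using this
  have hnum : Tendsto num atBot (𝓝 1) := by
    have := (hmul.sub tendsto_exp_atBot).add_const 1
    rw [sub_zero, zero_add] at this
    exact this
  have hden : Tendsto den atBot atTop := by
    refine tendsto_atTop_mono' _ ?_ tendsto_neg_atBot_atTop
    filter_upwards [eventually_le_atBot (-1)] with u hu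
    unfold den
    nlinarith [exp_le_one_iff.2 (hu.trans (by norm_num)), exp_pos u]
  exact hnum.div_atTop hden

variable {h : ℝ → ℝ}

lemma hasDerivAt_of_ne (hdef : ∀ u : ℝ, u ≠ 0 → h u = 1 + (exp u - 1) / u) {u : ℝ}
    (hu : u ≠ 0) : HasDerivAt h (num u / u ^ 2) u :=
  ((((hasDerivAt_exp u).sub_const 1).div (hasDerivAt_id' u) hu).const_add 1
    |>.congr_of_eventuallyEq ((eventually_ne_nhds hu).mono hdef)).congr_deriv
      (by rw [num]; ring)

lemma continuousAt_zero (hdef : ∀ u : ℝ, u ≠ 0 → h u = 1 + (exp u - 1) / u)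
    (h0 : h 0 = 2) : ContinuousAt h 0 := by
  rw [← continuousWithinAt_compl_self, ContinuousWithinAt, h0]
  have := tendsto_exp_sub_one_div_nhdsNE.const_add 1
  norm_num at this
  exact this.congr' (eventually_mem_nhdsWithin.mono fun u hu => (hdef u hu).symm)

lemma deriv_eq (hdef : ∀ u : ℝ, u ≠ 0 → h u = 1 + (exp u - 1) / u)
    (h0 : h 0 = 2) : deriv h = Function.update (fun u => num u / u ^ 2) 0 (1 / 2) :=
  funext fun u => (hasDerivAt_of_hasDerivAt_of_ne'
    (fun y hy => by rw [Function.update_of_ne hy]; exact hasDerivAt_of_ne hdef hy)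
    (continuousAt_zero hdef h0) (continuousAt_update_same.2 tendsto_num_div_sq_nhdsNE) u).deriv

lemma logDeriv_zero (hdef : ∀ u : ℝ, u ≠ 0 → h u = 1 + (exp u - 1) / u)
    (h0 : h 0 = 2) : logDeriv h 0 = 1 / 4 := by
  rw [logDeriv_apply, deriv_eq hdef h0, Function.update_self, h0]
  norm_num

lemma logDeriv_eq_of_ne (hdef : ∀ u : ℝ, u ≠ 0 → h u = 1 + (exp u - 1) / u) {u : ℝ}
    (hu : u ≠ 0) : logDeriv h u = num u / den u := by
  have hden : u ^ 2 * h u = den u := by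
    rw [hdef u hu, den]; field_simp; ring
  rw [logDeriv_apply, (hasDerivAt_of_ne hdef hu).deriv, div_div, hden]

lemma hasDerivAt_logDeriv_of_ne (hdef : ∀ u : ℝ, u ≠ 0 → h u = 1 + (exp u - 1) / u)
    {u : ℝ} (hu : u ≠ 0) : HasDerivAt (logDeriv h) (wronskian u / den u ^ 2) u :=
  (hasDerivAt_num_div_den hu).congr_of_eventuallyEq
    ((eventually_ne_nhds hu).mono fun _ hx => logDeriv_eq_of_ne hdef hx)

lemma continuous_logDeriv (hdef : ∀ u : ℝ, u ≠ 0 → h u = 1 + (exp u - 1) / u)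
    (h0 : h 0 = 2) : Continuous (logDeriv h) := by
  refine continuous_iff_continuousAt.2 fun u => ?_
  rcases eq_or_ne u 0 with rfl | hu
  · have hderiv : ContinuousAt (deriv h) 0 := by
      rw [deriv_eq hdef h0]
      exact continuousAt_update_same.2 tendsto_num_div_sq_nhdsNE
    exact hderiv.div (continuousAt_zero hdef h0) (by rw [h0]; norm_num)
  · exact (hasDerivAt_logDeriv_of_ne hdef hu).continuousAt

lemma strictMono_logDeriv (hdef : ∀ u : ℝ, u ≠ 0 → h u = 1 + (exp u - 1) / u)
    (h0 : h 0 = 2) : StrictMono (logDeriv h) := by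
  have hpos {u : ℝ} (hu : u ≠ 0) : 0 < deriv (logDeriv h) u := by
    rw [(hasDerivAt_logDeriv_of_ne hdef hu).deriv]
    exact div_pos (wronskian_pos hu) (pow_pos (den_pos hu) 2)
  have hcont := continuous_logDeriv hdef h0
  refine StrictMonoOn.Iic_union_Ici (a := 0) ?_ ?_
  · exact strictMonoOn_of_deriv_pos (convex_Iic 0) hcont.continuousOn fun u hu =>
      hpos (by rw [interior_Iic] at hu; exact hu.ne)
  · exact strictMonoOn_of_deriv_pos (convex_Ici 0) hcont.continuousOn fun u hu =>
      hpos (by rw [interior_Ici] at hu; exact hu.ne')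

lemma logDeriv_mem_Ioo (hdef : ∀ u : ℝ, u ≠ 0 → h u = 1 + (exp u - 1) / u)
    (h0 : h 0 = 2) (u : ℝ) : logDeriv h u ∈ Ioo 0 1 := by
  rcases eq_or_ne u 0 with rfl | hu
  · rw [logDeriv_zero hdef h0]; norm_num
  · rw [logDeriv_eq_of_ne hdef hu]
    exact ⟨div_pos (num_pos hu) (den_pos hu), (div_lt_one (den_pos hu)).2 (num_lt_den hu)⟩

lemma tendsto_logDeriv_atTop (hdef : ∀ u : ℝ, u ≠ 0 → h u = 1 + (exp u - 1) / u) :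
    Tendsto (logDeriv h) atTop (𝓝 1) :=
  tendsto_num_div_den_atTop.congr' <|
    (eventually_ne_atTop 0).mono fun _ hu => (logDeriv_eq_of_ne hdef hu).symm

lemma tendsto_logDeriv_atBot (hdef : ∀ u : ℝ, u ≠ 0 → h u = 1 + (exp u - 1) / u) :
    Tendsto (logDeriv h) atBot (𝓝 0) :=
  tendsto_num_div_den_atBot.congr' <|
    (eventually_ne_atBot 0).mono fun _ hu => (logDeriv_eq_of_ne hdef hu).symm

end OneAddExpSlope

open OneAddExpSlope in
theorem stmt_13 (h : ℝ → ℝ)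
    (hdef : ∀ u : ℝ, u ≠ 0 → h u = 1 + (Real.exp u - 1) / u) (h0 : h 0 = 2) :
    (fun u : ℝ => deriv h u / h u) 0 = 1 / 4 ∧
    StrictMono (fun u : ℝ => deriv h u / h u) ∧
    Set.BijOn (fun u : ℝ => deriv h u / h u) Set.univ (Set.Ioo 0 1) := by
  have hmono := strictMono_logDeriv hdef h0
  refine ⟨logDeriv_zero hdef h0, hmono, fun u _ => logDeriv_mem_Ioo hdef h0 u,
    hmono.injective.injOn, ?_⟩
  rw [SurjOn, image_univ]
  exact (continuous_logDeriv hdef h0).Ioo_subset_range_of_tendsto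
    (tendsto_logDeriv_atBot hdef) (tendsto_logDeriv_atTop hdef)
end

section
/- Suppose positive reals (a_n) satisfy max_{1≤i≤n} a_i / ∑_{i=1}^n A_i^{-1}a_i² → 0, where A_i = a_1+⋯+a_i, and ∑_{i=1}^n A_i^{-1}a_i² → ∞. Let D_n = ∑_{i=1}^n a_i V_i 1{U_i ≤ a_i/A_i} with U_i, V_i i.i.d. uniform(0,1). Then D_n / ∑_{i=1}^n A_i^{-1}a_i² → 1/2 in probability. -/
/-!
The summand `a i * V i * 1{U i ≤ a i / A i}` has mean `a i ^ 2 / (2 A i)` and second moment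
`a i ^ 3 / (3 A i) ≤ (max_{j ≤ n} a j) * a i ^ 2 / (3 A i)`. By independence, `D n` has mean
`S n / 2` and variance at most `(max_{j ≤ n} a j) * S n / 3`, so Chebyshev's inequality bounds
`ℙ(|D n / S n - 1/2| > ε)` by `(max_{j ≤ n} a j / S n) / (3 ε²)`, which tends to `0`.
-/

open MeasureTheory ProbabilityTheory Filter Set

lemma measurable_ite_le_const (p : ℝ) : Measurable fun x : ℝ => if x ≤ p then (1:ℝ) else 0 :=
  measurable_const.ite measurableSet_Iic measurable_const

section Uniform

variable {Ω : Type*} [MeasurableSpace Ω] {μ : Measure Ω} {W : Ω → ℝ}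

lemma volume_restrict_Ioo_zero_one_Iic {p : ℝ} (hp1 : p ≤ 1) :
    volume.restrict (Ioo (0:ℝ) 1) (Iic p) = ENNReal.ofReal p := by
  rw [Measure.restrict_apply measurableSet_Iic]
  apply le_antisymm
  · calc volume (Iic p ∩ Ioo 0 1) ≤ volume (Ioc 0 p) :=
          measure_mono fun x ⟨hxp, hx0, _⟩ => ⟨hx0, hxp⟩
      _ = ENNReal.ofReal p := by simp
  · calc ENNReal.ofReal p = volume (Ioo 0 p) := by simp
      _ ≤ volume (Iic p ∩ Ioo 0 1) :=
          measure_mono fun x ⟨hx0, hxp⟩ => ⟨hxp.le, hx0, hxp.trans_le hp1⟩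

lemma setIntegral_Ioo_zero_one_ite_le {p : ℝ} (hp : p ∈ Icc 0 1) :
    ∫ x in Ioo (0:ℝ) 1, (if x ≤ p then (1:ℝ) else 0) = p := by
  have : (fun x : ℝ => if x ≤ p then (1:ℝ) else 0) = (Iic p).indicator 1 := by
    ext x; simp [indicator_apply]
  rw [this, integral_indicator_one measurableSet_Iic, measureReal_def,
    volume_restrict_Ioo_zero_one_Iic hp.2, ENNReal.toReal_ofReal hp.1]

variable (hW : μ.map W = volume.restrict (Ioo (0:ℝ) 1))
include hW

lemma aemeasurable_of_map_eq_uniform : AEMeasurable W μ :=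
  .of_map_ne_zero (by simp [hW])

lemma ae_mem_Ioo_of_map_eq_uniform : ∀ᵐ ω ∂μ, W ω ∈ Ioo (0:ℝ) 1 :=
  (ae_map_iff (aemeasurable_of_map_eq_uniform hW) measurableSet_Ioo).mp
    (hW ▸ ae_restrict_mem measurableSet_Ioo)

lemma integral_comp_of_map_eq_uniform {g : ℝ → ℝ} (hg : Measurable g) :
    ∫ ω, g (W ω) ∂μ = ∫ x in Ioo (0:ℝ) 1, g x := by
  rw [← hW, integral_map (aemeasurable_of_map_eq_uniform hW) hg.aestronglyMeasurable]

lemma integral_of_map_eq_uniform : ∫ ω, W ω ∂μ = 1 / 2 := by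
  rw [integral_comp_of_map_eq_uniform hW (g := fun x => x) measurable_id,
    ← integral_Ioc_eq_integral_Ioo, ← intervalIntegral.integral_of_le zero_le_one]
  norm_num

lemma integral_sq_of_map_eq_uniform : ∫ ω, W ω ^ 2 ∂μ = 1 / 3 := by
  rw [integral_comp_of_map_eq_uniform hW (g := fun x => x ^ 2) (measurable_id.pow_const 2),
    ← integral_Ioc_eq_integral_Ioo, ← intervalIntegral.integral_of_le zero_le_one, integral_pow]
  norm_num

lemma integral_ite_le_of_map_eq_uniform {p : ℝ} (hp : p ∈ Icc 0 1) :
    ∫ ω, (if W ω ≤ p then (1:ℝ) else 0) ∂μ = p := by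
  rw [integral_comp_of_map_eq_uniform hW (measurable_ite_le_const p),
    setIntegral_Ioo_zero_one_ite_le hp]

end Uniform

section ThinnedUniform

variable {Ω : Type*} [MeasurableSpace Ω] {μ : Measure Ω} {W T : Ω → ℝ}
  (hW : μ.map W = volume.restrict (Ioo (0:ℝ) 1)) (hT : μ.map T = volume.restrict (Ioo (0:ℝ) 1))
  (c : ℝ) {p : ℝ}

include hW hT in
lemma memLp_two_mul_ite_le_of_map_eq_uniform [IsFiniteMeasure μ] :
    MemLp (fun ω => c * W ω * (if T ω ≤ p then (1:ℝ) else 0)) 2 μ := by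
  refine MemLp.of_bound (C := |c|) ?_ ?_
  · exact ((aemeasurable_of_map_eq_uniform hW).const_mul c).mul
      ((measurable_ite_le_const p).comp_aemeasurable (aemeasurable_of_map_eq_uniform hT))
      |>.aestronglyMeasurable
  · filter_upwards [ae_mem_Ioo_of_map_eq_uniform hW] with ω ⟨hW0, hW1⟩
    have hind : |if T ω ≤ p then (1:ℝ) else 0| ≤ 1 := by split_ifs <;> simp
    rw [Real.norm_eq_abs, abs_mul, abs_mul, abs_of_pos hW0]
    calc |c| * W ω * |if T ω ≤ p then (1:ℝ) else 0| ≤ |c| * 1 * 1 := by gcongr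
      _ = |c| := by ring

variable (hWT : IndepFun W T μ)
include hW hT hWT

lemma integral_mul_ite_le_of_map_eq_uniform (hp : p ∈ Icc 0 1) :
    ∫ ω, c * W ω * (if T ω ≤ p then (1:ℝ) else 0) ∂μ = c * p / 2 := by
  have hind : IndepFun W (fun ω => if T ω ≤ p then (1:ℝ) else 0) μ :=
    hWT.comp measurable_id (measurable_ite_le_const p)
  simp_rw [mul_assoc]
  rw [integral_const_mul, hind.integral_fun_mul_eq_mul_integral
    (aemeasurable_of_map_eq_uniform hW).aestronglyMeasurable
    ((measurable_ite_le_const p).comp_aemeasurable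
      (aemeasurable_of_map_eq_uniform hT)).aestronglyMeasurable,
    integral_of_map_eq_uniform hW, integral_ite_le_of_map_eq_uniform hT hp]
  ring

lemma variance_mul_ite_le_of_map_eq_uniform [IsProbabilityMeasure μ] (hp : p ∈ Icc 0 1) :
    variance (fun ω => c * W ω * (if T ω ≤ p then (1:ℝ) else 0)) μ ≤ c ^ 2 * p / 3 := by
  have hind : IndepFun (fun ω => W ω ^ 2) (fun ω => if T ω ≤ p then (1:ℝ) else 0) μ :=
    hWT.comp (measurable_id.pow_const 2) (measurable_ite_le_const p)
  have hsq ω : (c * W ω * (if T ω ≤ p then (1:ℝ) else 0)) ^ 2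
      = c ^ 2 * (W ω ^ 2 * (if T ω ≤ p then (1:ℝ) else 0)) := by
    split_ifs <;> ring
  refine (variance_le_expectation_sq
    (memLp_two_mul_ite_le_of_map_eq_uniform hW hT c).aestronglyMeasurable).trans_eq ?_
  simp only [Pi.pow_apply, hsq]
  rw [integral_const_mul, hind.integral_fun_mul_eq_mul_integral
    ((aemeasurable_of_map_eq_uniform hW).pow_const 2).aestronglyMeasurable
    ((measurable_ite_le_const p).comp_aemeasurable
      (aemeasurable_of_map_eq_uniform hT)).aestronglyMeasurable,
    integral_sq_of_map_eq_uniform hW, integral_ite_le_of_map_eq_uniform hT hp]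
  ring

end ThinnedUniform

lemma tendsto_measure_abs_div_sub_gt_of_variance_le {Ω : Type*} [MeasurableSpace Ω]
    {μ : Measure Ω} [IsFiniteMeasure μ] {X : ℕ → Ω → ℝ} {S b : ℕ → ℝ} {m ε : ℝ}
    (hX : ∀ n, MemLp (X n) 2 μ) (hmean : ∀ n, μ[X n] = m * S n)
    (hvar : ∀ n, variance (X n) μ ≤ b n * S n) (hS : ∀ᶠ n in atTop, 0 < S n)
    (hb : Tendsto (fun n => b n / S n) atTop (nhds 0)) (hε : 0 < ε) :
    Tendsto (fun n => μ.real {ω | ε < |X n ω / S n - m|}) atTop (nhds 0) := by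
  have hbound : ∀ᶠ n in atTop, μ.real {ω | ε < |X n ω / S n - m|} ≤ (ε ^ 2)⁻¹ * (b n / S n) := by
    filter_upwards [hS] with n hSn
    have hsub : {ω | ε < |X n ω / S n - m|} ⊆ {ω | ε * S n ≤ |X n ω - μ[X n]|} := by
      intro ω hω
      have : X n ω / S n - m = (X n ω - μ[X n]) / S n := by rw [hmean]; field_simp
      rw [mem_ofPred_eq, this, abs_div, abs_of_pos hSn, lt_div_iff₀ hSn] at hω
      exact hω.le
    calc μ.real {ω | ε < |X n ω / S n - m|}
        ≤ μ.real {ω | ε * S n ≤ |X n ω - μ[X n]|} := measureReal_mono hsub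
      _ ≤ variance (X n) μ / (ε * S n) ^ 2 := by
          rw [measureReal_def]
          exact ENNReal.toReal_le_of_le_ofReal (div_nonneg (variance_nonneg _ _) (sq_nonneg _))
            (meas_ge_le_variance_div_sq (hX n) (by positivity))
      _ ≤ b n * S n / (ε * S n) ^ 2 := by gcongr; exact hvar n
      _ = (ε ^ 2)⁻¹ * (b n / S n) := by field_simp
  exact squeeze_zero' (.of_forall fun n => measureReal_nonneg) hbound
    (by simpa using hb.const_mul (ε ^ 2)⁻¹)

lemma Finset.le_ciSup_of_mem {ι α : Type*} [ConditionallyCompleteLattice α] {s : Finset ι}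
    (f : ι → α) {i : ι} (hi : i ∈ s) : f i ≤ ⨆ j ∈ s, f j :=
  le_ciSup₂ (f := fun j (_ : j ∈ s) => f j)
    ((s.finite_toSet.image f).bddAbove.mono <| by
      rintro _ ⟨_, ⟨j, rfl⟩, hj, rfl⟩; exact ⟨j, hj, rfl⟩) i hi

lemma Finset.sum_mul_le_ciSup_mul_sum {ι : Type*} {s : Finset ι} (f w : ι → ℝ)
    (hw : ∀ i ∈ s, 0 ≤ w i) : ∑ i ∈ s, f i * w i ≤ (⨆ i ∈ s, f i) * ∑ i ∈ s, w i := by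
  rw [Finset.mul_sum]
  exact Finset.sum_le_sum fun i hi =>
    mul_le_mul_of_nonneg_right (Finset.le_ciSup_of_mem f hi) (hw i hi)

section PartialSums

variable {a : ℕ → ℝ} (ha : ∀ i, 1 ≤ i → 0 < a i)
include ha

lemma sum_Icc_one_pos {n : ℕ} (hn : 1 ≤ n) : 0 < ∑ i ∈ Finset.Icc 1 n, a i :=
  Finset.sum_pos (fun i hi => ha i (Finset.mem_Icc.mp hi).1) ⟨n, Finset.mem_Icc.mpr ⟨hn, le_rfl⟩⟩

lemma le_sum_Icc_one {n : ℕ} (hn : 1 ≤ n) : a n ≤ ∑ i ∈ Finset.Icc 1 n, a i :=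
  Finset.single_le_sum (fun i hi => (ha i (Finset.mem_Icc.mp hi).1).le)
    (Finset.mem_Icc.mpr ⟨hn, le_rfl⟩)

end PartialSums

noncomputable def thinnedSum {Ω : Type*} (U V : ℕ → Ω → ℝ) (s : Finset ℕ) (c p : ℕ → ℝ) :
    Ω → ℝ :=
  ∑ i ∈ s, fun ω => c i * V i ω * (if U i ω ≤ p i then (1:ℝ) else 0)

section Thinning

variable {Ω : Type*} [MeasurableSpace Ω] {μ : Measure Ω}
  {U V : ℕ → Ω → ℝ} (hIndep : iIndepFun (fun q : ℕ × Bool => if q.2 then U q.1 else V q.1) μ)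
  (hU : ∀ i, μ.map (U i) = volume.restrict (Ioo (0:ℝ) 1))
  (hV : ∀ i, μ.map (V i) = volume.restrict (Ioo (0:ℝ) 1))
  (s : Finset ℕ) (c : ℕ → ℝ) {p : ℕ → ℝ}

include hIndep in
lemma indepFun_of_iIndepFun_ite (i : ℕ) : IndepFun (V i) (U i) μ := by
  simpa using hIndep.indepFun (show ((i, false) : ℕ × Bool) ≠ (i, true) by simp)

include hIndep hU hV in
lemma indepFun_mul_ite_le_of_iIndepFun {i j : ℕ} (hij : i ≠ j) (c c' p p' : ℝ) :
    IndepFun (fun ω => c * V i ω * (if U i ω ≤ p then (1:ℝ) else 0))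
      (fun ω => c' * V j ω * (if U j ω ≤ p' then (1:ℝ) else 0)) μ := by
  have hUV : ∀ q : ℕ × Bool, AEMeasurable (if q.2 then U q.1 else V q.1) μ := by
    rintro ⟨k, _ | _⟩
    exacts [aemeasurable_of_map_eq_uniform (hV k), aemeasurable_of_map_eq_uniform (hU k)]
  have hpair : IndepFun (fun ω => (V i ω, U i ω)) (fun ω => (V j ω, U j ω)) μ := by
    simpa using hIndep.indepFun_prodMk_prodMk₀ hUV (i, false) (i, true) (j, false) (j, true)
      (by simp [hij]) (by simp [hij]) (by simp [hij]) (by simp [hij])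
  exact hpair.comp ((measurable_const.mul measurable_fst).mul
      ((measurable_ite_le_const p).comp measurable_snd))
    ((measurable_const.mul measurable_fst).mul ((measurable_ite_le_const p').comp measurable_snd))

include hU hV in
lemma memLp_thinnedSum [IsFiniteMeasure μ] : MemLp (thinnedSum U V s c p) 2 μ :=
  memLp_finsetSum' s fun i _ => memLp_two_mul_ite_le_of_map_eq_uniform (hV i) (hU i) (c i)

include hIndep hU hV

lemma integral_thinnedSum [IsFiniteMeasure μ] (hp : ∀ i ∈ s, p i ∈ Icc 0 1) :
    μ[thinnedSum U V s c p] = ∑ i ∈ s, c i * p i / 2 := by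
  simp only [thinnedSum, Finset.sum_apply]
  rw [integral_finsetSum _ fun i _ =>
    (memLp_two_mul_ite_le_of_map_eq_uniform (hV i) (hU i) (c i)).integrable one_le_two]
  exact Finset.sum_congr rfl fun i hi => integral_mul_ite_le_of_map_eq_uniform (hV i) (hU i) (c i)
    (indepFun_of_iIndepFun_ite hIndep i) (hp i hi)

lemma variance_thinnedSum_le [IsProbabilityMeasure μ] (hp : ∀ i ∈ s, p i ∈ Icc 0 1) :
    variance (thinnedSum U V s c p) μ ≤ ∑ i ∈ s, c i ^ 2 * p i / 3 := by
  rw [thinnedSum, IndepFun.variance_sum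
    (fun i _ => memLp_two_mul_ite_le_of_map_eq_uniform (hV i) (hU i) (c i))
    (fun i _ j _ hij => indepFun_mul_ite_le_of_iIndepFun hIndep hU hV hij _ _ _ _)]
  exact Finset.sum_le_sum fun i hi => variance_mul_ite_le_of_map_eq_uniform (hV i) (hU i) (c i)
    (indepFun_of_iIndepFun_ite hIndep i) (hp i hi)

end Thinning

theorem stmt_14_general (Ω : Type*) [MeasureSpace Ω] [IsProbabilityMeasure (ℙ : Measure Ω)]
    (a : ℕ → ℝ) (ha : ∀ i, 1 ≤ i → 0 < a i)
    (A : ℕ → ℝ) (hA : ∀ n, A n = ∑ i ∈ Finset.Icc 1 n, a i)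
    (S : ℕ → ℝ) (hS : ∀ n, S n = ∑ i ∈ Finset.Icc 1 n, (a i) ^ 2 / A i)
    (hmax : Tendsto (fun n : ℕ => (⨆ i ∈ Finset.Icc 1 n, a i) / S n) atTop (nhds 0))
    (U V : ℕ → Ω → ℝ)
    (hIndep : iIndepFun (m := fun _ : ℕ × Bool => (inferInstance : MeasurableSpace ℝ))
      (fun p : ℕ × Bool => if p.2 then U p.1 else V p.1) ℙ)
    (hU : ∀ i, Measure.map (U i) ℙ = volume.restrict (Set.Ioo (0:ℝ) 1))
    (hV : ∀ i, Measure.map (V i) ℙ = volume.restrict (Set.Ioo (0:ℝ) 1))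
    (D : ℕ → Ω → ℝ)
    (hD : ∀ n ω, D n ω =
      ∑ i ∈ Finset.Icc 1 n, a i * V i ω * (if U i ω ≤ a i / A i then (1:ℝ) else 0)) :
    ∀ ε : ℝ, 0 < ε →
      Tendsto (fun n : ℕ => (ℙ {ω | ε < |D n ω / S n - 1 / 2|}).toReal) atTop (nhds 0) := by
  intro ε hε
  have hA_pos i (hi : 1 ≤ i) : 0 < A i := hA i ▸ sum_Icc_one_pos ha hi
  have hp n : ∀ i ∈ Finset.Icc 1 n, a i / A i ∈ Icc 0 1 := fun i hi =>
    have hi := (Finset.mem_Icc.mp hi).1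
    ⟨div_nonneg (ha i hi).le (hA_pos i hi).le,
      div_le_one_of_le₀ (hA i ▸ le_sum_Icc_one ha hi) (hA_pos i hi).le⟩
  have hD n : D n = thinnedSum U V (Finset.Icc 1 n) a (fun i => a i / A i) := by
    ext ω; simp [thinnedSum, hD]
  refine tendsto_measure_abs_div_sub_gt_of_variance_le
    (b := fun n => (⨆ i ∈ Finset.Icc 1 n, a i) / 3) (fun n => hD n ▸ memLp_thinnedSum hU hV _ _)
    (fun n => ?_) (fun n => ?_) ?_
    (by simpa [div_div_eq_mul_div, div_right_comm] using hmax.div_const 3) hε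
  · rw [hD n, integral_thinnedSum hIndep hU hV _ _ (hp n), hS, Finset.mul_sum]
    exact Finset.sum_congr rfl fun i _ => by ring
  · calc variance (D n) ℙ ≤ ∑ i ∈ Finset.Icc 1 n, a i ^ 2 * (a i / A i) / 3 :=
          hD n ▸ variance_thinnedSum_le hIndep hU hV _ _ (hp n)
      _ = (∑ i ∈ Finset.Icc 1 n, a i * (a i ^ 2 / A i)) / 3 := by
          rw [Finset.sum_div]; exact Finset.sum_congr rfl fun i _ => by ring
      _ ≤ (⨆ i ∈ Finset.Icc 1 n, a i) / 3 * S n := by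
          rw [div_mul_eq_mul_div, hS]
          gcongr
          exact Finset.sum_mul_le_ciSup_mul_sum a _ fun i hi =>
            div_nonneg (sq_nonneg _) (hA_pos i (Finset.mem_Icc.mp hi).1).le
  · filter_upwards [eventually_ge_atTop 1] with n hn
    exact hS n ▸ Finset.sum_pos (fun i hi => have hi := (Finset.mem_Icc.mp hi).1
      div_pos (pow_pos (ha i hi) 2) (hA_pos i hi)) ⟨n, Finset.mem_Icc.mpr ⟨hn, le_rfl⟩⟩

theorem stmt_14 (Ω : Type*) [MeasureSpace Ω] [IsProbabilityMeasure (ℙ : Measure Ω)]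
    (a : ℕ → ℝ) (ha : ∀ i, 1 ≤ i → 0 < a i)
    (A : ℕ → ℝ) (hA : ∀ n, A n = ∑ i ∈ Finset.Icc 1 n, a i)
    (S : ℕ → ℝ) (hS : ∀ n, S n = ∑ i ∈ Finset.Icc 1 n, (a i) ^ 2 / A i)
    (hmax : Tendsto (fun n : ℕ => (⨆ i ∈ Finset.Icc 1 n, a i) / S n) atTop (nhds 0))
    (hdiv : Tendsto S atTop atTop)
    (U V : ℕ → Ω → ℝ)
    (hIndep : iIndepFun (m := fun _ : ℕ × Bool => (inferInstance : MeasurableSpace ℝ))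
      (fun p : ℕ × Bool => if p.2 then U p.1 else V p.1) ℙ)
    (hU : ∀ i, Measure.map (U i) ℙ = volume.restrict (Set.Ioo (0:ℝ) 1))
    (hV : ∀ i, Measure.map (V i) ℙ = volume.restrict (Set.Ioo (0:ℝ) 1))
    (hUm : ∀ i, Measurable (U i)) (hVm : ∀ i, Measurable (V i))
    (D : ℕ → Ω → ℝ)
    (hD : ∀ n ω, D n ω =
      ∑ i ∈ Finset.Icc 1 n, a i * V i ω * (if U i ω ≤ a i / A i then (1:ℝ) else 0)) :
    ∀ ε : ℝ, 0 < ε →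
      Tendsto (fun n : ℕ => (ℙ {ω | ε < |D n ω / S n - 1 / 2|}).toReal) atTop (nhds 0) :=
  stmt_14_general Ω a ha A hA S hS hmax U V hIndep hU hV D hD
end
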